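/- arXiv:1605.03826 — 2 statements merged into one kernel-verified Lean document; each statement's English description precedes it below -/
import Mathlib

section
/- Let v : 2^Ω → ℕ be a valuation with v(∅) = 0 that is monotone with respect to inclusion. The following are equivalent: (1) for every p ∈ ℕ^m and every S ⊆ Ω with p_j ≥ 1 for all j ∈ S, u(p) = u(p − 1_S) − h_p(S); (2) for every p ∈ ℕ^m and every S ⊆ Ω, u(p) = u(p + 1_S) + l_p(S); (3) v is gross substitute. -/
/-- Utility of a bundle `S` at prices `p`: `v(S) - p(S)` (an integer). -/
def util {m : ℕ} (v : Finset (Fin m) → ℕ) (p : Fin m → ℕ) (S : Finset (Fin m)) : ℤ :=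
  (v S : ℤ) - ∑ j ∈ S, (p j : ℤ)

/-- Demand collection: bundles of maximum utility at prices `p`. -/
def demand {m : ℕ} (v : Finset (Fin m) → ℕ) (p : Fin m → ℕ) : Finset (Finset (Fin m)) :=
  Finset.univ.filter fun D => ∀ T : Finset (Fin m), util v p T ≤ util v p D

lemma demand_nonempty {m : ℕ} (v : Finset (Fin m) → ℕ) (p : Fin m → ℕ) :
    (demand v p).Nonempty := by
  obtain ⟨D, hD, hmax⟩ := Finset.exists_max_image (Finset.univ : Finset (Finset (Fin m)))
    (util v p) ⟨∅, Finset.mem_univ ∅⟩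
  exact ⟨D, Finset.mem_filter.2 ⟨Finset.mem_univ D, fun T => hmax T (Finset.mem_univ T)⟩⟩

/-- Maximum utility of a bidder at prices `p`. -/
def uMax {m : ℕ} (v : Finset (Fin m) → ℕ) (p : Fin m → ℕ) : ℤ :=
  Finset.univ.sup' Finset.univ_nonempty (util v p)

/-- A valuation is monotone with respect to inclusion. -/
def MonotoneVal {m : ℕ} (v : Finset (Fin m) → ℕ) : Prop :=
  ∀ ⦃S T : Finset (Fin m)⦄, S ⊆ T → v S ≤ v T

/-- Gross substitute: if `S` is demanded at `p` and `q ≥ p`, some demanded set at `q`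
contains every item of `S` whose price did not change. -/
def GrossSub {m : ℕ} (v : Finset (Fin m) → ℕ) : Prop :=
  ∀ p q : Fin m → ℕ, p ≤ q → ∀ S ∈ demand v p,
    ∃ S' ∈ demand v q, ∀ j ∈ S, p j = q j → j ∈ S'

/-- Requirement `l_p(S)` of a single bidder. -/
def req {m : ℕ} (v : Finset (Fin m) → ℕ) (p : Fin m → ℕ) (S : Finset (Fin m)) : ℕ :=
  (demand v p).inf' (demand_nonempty v p) fun D => (S ∩ D).card

/-- Redundant `h_p(S)` of a single bidder. -/
def red {m : ℕ} (v : Finset (Fin m) → ℕ) (p : Fin m → ℕ) (S : Finset (Fin m)) : ℕ :=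
  (demand v p).sup' (demand_nonempty v p) fun D => (S ∩ D).card

/-- Auction requirement `l^p(S)`. -/
def reqAll {m n : ℕ} (v : Fin n → Finset (Fin m) → ℕ) (p : Fin m → ℕ) (S : Finset (Fin m)) : ℕ :=
  ∑ i, req (v i) p S

/-- Auction redundant `h^p(S)`. -/
def redAll {m n : ℕ} (v : Fin n → Finset (Fin m) → ℕ) (p : Fin m → ℕ) (S : Finset (Fin m)) : ℕ :=
  ∑ i, red (v i) p S

/-- Lyapunov function `L(p) = Σ_i u_i(p) + Σ_j p_j`. -/
def lyap {m n : ℕ} (v : Fin n → Finset (Fin m) → ℕ) (p : Fin m → ℕ) : ℤ :=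
  ∑ i, uMax (v i) p + ∑ j, (p j : ℤ)

/-- `p` is Walrasian: there is a partition of the items into demanded sets. -/
def IsWalrasian {m n : ℕ} (v : Fin n → Finset (Fin m) → ℕ) (p : Fin m → ℕ) : Prop :=
  ∃ A : Fin n → Finset (Fin m),
    (∀ i j, i ≠ j → Disjoint (A i) (A j)) ∧
    Finset.univ.biUnion A = Finset.univ ∧
    ∀ i, A i ∈ demand (v i) p

/-- `p + 1_S`. -/
def incr {m : ℕ} (p : Fin m → ℕ) (S : Finset (Fin m)) : Fin m → ℕ :=
  fun j => if j ∈ S then p j + 1 else p j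

/-- `p - 1_S`. -/
def decr {m : ℕ} (p : Fin m → ℕ) (S : Finset (Fin m)) : Fin m → ℕ :=
  fun j => if j ∈ S then p j - 1 else p j

/-- `S` is over-demanded at `p`: `l^p(S) > |S|`. -/
def OverDemanded {m n : ℕ} (v : Fin n → Finset (Fin m) → ℕ) (p : Fin m → ℕ)
    (S : Finset (Fin m)) : Prop :=
  S.card < reqAll v p S

/-- `S` is weakly over-demanded at `p`: `l^p(S) ≥ |S|`. -/
def WeaklyOverDemanded {m n : ℕ} (v : Fin n → Finset (Fin m) → ℕ) (p : Fin m → ℕ)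
    (S : Finset (Fin m)) : Prop :=
  S.card ≤ reqAll v p S

/-- `S` is under-demanded at `p`: `h^p(S) < |S|`. -/
def UnderDemanded {m n : ℕ} (v : Fin n → Finset (Fin m) → ℕ) (p : Fin m → ℕ)
    (S : Finset (Fin m)) : Prop :=
  redAll v p S < S.card

/-- `S` is weakly under-demanded at `p`: `h^p(S) ≤ |S|`. -/
def WeaklyUnderDemanded {m n : ℕ} (v : Fin n → Finset (Fin m) → ℕ) (p : Fin m → ℕ)
    (S : Finset (Fin m)) : Prop :=
  redAll v p S ≤ S.card

/-- `S ∈ ED(p)`: `S` is over-demanded at `p` and no nonempty `T ⊆ S` is weakly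
under-demanded at `p + 1_S`. -/
def ExcessDemand {m n : ℕ} (v : Fin n → Finset (Fin m) → ℕ) (p : Fin m → ℕ)
    (S : Finset (Fin m)) : Prop :=
  OverDemanded v p S ∧
    ∀ T ⊆ S, T ≠ ∅ → ¬ WeaklyUnderDemanded v (incr p S) T

/-- `S ∈ DD(p)`: `S` is under-demanded at `p` and no nonempty `T ⊆ S` is weakly
over-demanded at `p - 1_S`. -/
def DearthDemand {m n : ℕ} (v : Fin n → Finset (Fin m) → ℕ) (p : Fin m → ℕ)
    (S : Finset (Fin m)) : Prop :=
  UnderDemanded v p S ∧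
    ∀ T ⊆ S, T ≠ ∅ → ¬ WeaklyOverDemanded v (decr p S) T

/-- `S` is a minimal minimizer for `p`. -/
def MinimalMinimizer {m n : ℕ} (v : Fin n → Finset (Fin m) → ℕ) (p : Fin m → ℕ)
    (S : Finset (Fin m)) : Prop :=
  lyap v (incr p S) < lyap v p ∧
    (∀ T : Finset (Fin m), lyap v (incr p S) ≤ lyap v (incr p T)) ∧
    ∀ T : Finset (Fin m), T ⊂ S → lyap v (incr p S) < lyap v (incr p T)

/-- `S` is a maximal minimizer for `p`. -/
def MaximalMinimizer {m n : ℕ} (v : Fin n → Finset (Fin m) → ℕ) (p : Fin m → ℕ)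
    (S : Finset (Fin m)) : Prop :=
  lyap v (decr p S) < lyap v p ∧
    (∀ T : Finset (Fin m), lyap v (decr p S) ≤ lyap v (decr p T)) ∧
    ∀ T : Finset (Fin m), T ⊂ S → lyap v (decr p S) < lyap v (decr p T)

section Aux

variable {m : ℕ}

lemma util_le_of_mem {v : Finset (Fin m) → ℕ} {p : Fin m → ℕ} {D : Finset (Fin m)}
    (hD : D ∈ demand v p) (T : Finset (Fin m)) : util v p T ≤ util v p D :=
  (Finset.mem_filter.1 hD).2 T

lemma mem_demand {v : Finset (Fin m) → ℕ} {p : Fin m → ℕ} {D : Finset (Fin m)}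
    (h : ∀ T, util v p T ≤ util v p D) : D ∈ demand v p :=
  Finset.mem_filter.2 ⟨Finset.mem_univ D, h⟩

lemma util_le_uMax (v : Finset (Fin m) → ℕ) (p : Fin m → ℕ) (T : Finset (Fin m)) :
    util v p T ≤ uMax v p :=
  Finset.le_sup' _ (Finset.mem_univ T)

lemma uMax_eq_of_mem {v : Finset (Fin m) → ℕ} {p : Fin m → ℕ} {D : Finset (Fin m)}
    (hD : D ∈ demand v p) : uMax v p = util v p D :=
  le_antisymm (Finset.sup'_le _ _ fun T _ => util_le_of_mem hD T) (util_le_uMax v p D)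

lemma mem_demand_of_eq {v : Finset (Fin m) → ℕ} {p : Fin m → ℕ} {D : Finset (Fin m)}
    (h : util v p D = uMax v p) : D ∈ demand v p :=
  mem_demand fun T => h ▸ util_le_uMax v p T

lemma sum_incr (p : Fin m → ℕ) (S T : Finset (Fin m)) :
    ∑ j ∈ T, ((incr p S j : ℕ) : ℤ) = ∑ j ∈ T, (p j : ℤ) + ((S ∩ T).card : ℤ) := by
  have h : ∀ j ∈ T, ((incr p S j : ℕ) : ℤ) = (p j : ℤ) + (if j ∈ S then 1 else 0) := by
    intro j _
    simp only [incr]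
    split_ifs <;> push_cast <;> ring
  rw [Finset.sum_congr rfl h, Finset.sum_add_distrib, Finset.sum_boole]
  simp [Finset.filter_mem_eq_inter, Finset.inter_comm]

lemma util_incr (v : Finset (Fin m) → ℕ) (p : Fin m → ℕ) (S T : Finset (Fin m)) :
    util v (incr p S) T = util v p T - ((S ∩ T).card : ℤ) := by
  unfold util
  rw [sum_incr]
  ring

lemma sum_decr (p : Fin m → ℕ) (S T : Finset (Fin m)) (hp : ∀ j ∈ S, 1 ≤ p j) :
    ∑ j ∈ T, ((decr p S j : ℕ) : ℤ) = ∑ j ∈ T, (p j : ℤ) - ((S ∩ T).card : ℤ) := by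
  have h : ∀ j ∈ T, ((decr p S j : ℕ) : ℤ) = (p j : ℤ) - (if j ∈ S then 1 else 0) := by
    intro j _
    simp only [decr]
    split_ifs with hj
    · have := hp j hj
      push_cast [Nat.cast_sub this]
      ring
    · ring
  rw [Finset.sum_congr rfl h, Finset.sum_sub_distrib, Finset.sum_boole]
  simp [Finset.filter_mem_eq_inter, Finset.inter_comm]

lemma util_decr (v : Finset (Fin m) → ℕ) (p : Fin m → ℕ) (S T : Finset (Fin m))
    (hp : ∀ j ∈ S, 1 ≤ p j) :
    util v (decr p S) T = util v p T + ((S ∩ T).card : ℤ) := by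
  unfold util
  rw [sum_decr p S T hp]
  ring

lemma uMax_incr_le (v : Finset (Fin m) → ℕ) (p : Fin m → ℕ) (S : Finset (Fin m)) :
    uMax v (incr p S) ≤ uMax v p := by
  apply Finset.sup'_le
  intro T _
  rw [util_incr]
  have := util_le_uMax v p T
  have : (0:ℤ) ≤ ((S ∩ T).card : ℤ) := Int.natCast_nonneg _
  omega

end Aux
section Key

variable {m : ℕ}

lemma singleton_inter_card {k : Fin m} {D : Finset (Fin m)} :
    (({k} : Finset (Fin m)) ∩ D).card = if k ∈ D then 1 else 0 := by
  split_ifs with h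
  · rw [Finset.singleton_inter_of_mem h]; simp
  · rw [Finset.singleton_inter_of_notMem h]; simp

lemma uMax_incr_single_avoid {v : Finset (Fin m) → ℕ} {p : Fin m → ℕ} {k : Fin m}
    {E : Finset (Fin m)} (hE : E ∈ demand v p) (hkE : k ∉ E) :
    uMax v (incr p {k}) = uMax v p := by
  refine le_antisymm (uMax_incr_le v p {k}) ?_
  have h := util_incr v p {k} E
  rw [singleton_inter_card, if_neg hkE] at h
  calc uMax v p = util v p E := uMax_eq_of_mem hE
    _ = util v (incr p {k}) E := by rw [h]; ring
    _ ≤ uMax v (incr p {k}) := util_le_uMax _ _ _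

lemma uMax_incr_single_all {v : Finset (Fin m) → ℕ} {p : Fin m → ℕ} {k : Fin m}
    (hall : ∀ E ∈ demand v p, k ∈ E) :
    uMax v (incr p {k}) = uMax v p - 1 := by
  obtain ⟨D, hD⟩ := demand_nonempty v p
  refine le_antisymm ?_ ?_
  · apply Finset.sup'_le
    intro T _
    rw [util_incr, singleton_inter_card]
    split_ifs with hkT
    · have := util_le_uMax v p T
      omega
    · have hTne : util v p T ≠ uMax v p := by
        intro heq
        exact hkT (hall T (mem_demand_of_eq heq))
      have := util_le_uMax v p T
      omega
  · have h := util_incr v p {k} D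
    rw [singleton_inter_card, if_pos (hall D hD)] at h
    have : util v (incr p {k}) D ≤ uMax v (incr p {k}) := util_le_uMax _ _ _
    have hu := uMax_eq_of_mem hD
    omega

lemma incr_insert (p : Fin m → ℕ) (S : Finset (Fin m)) (j : Fin m) (hj : j ∉ S) :
    incr p (insert j S) = incr (incr p S) {j} := by
  funext k
  simp only [incr, Finset.mem_insert, Finset.mem_singleton]
  by_cases hk : k = j
  · subst hk
    simp [hj]
  · simp [hk]

/-- Key lemma: under gross substitutes, some bundle is demanded both at `p` and `p + 1_S`. -/
lemma exists_common_demand {v : Finset (Fin m) → ℕ} (hgs : GrossSub v)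
    (S : Finset (Fin m)) (p : Fin m → ℕ) :
    ∃ D, D ∈ demand v p ∧ D ∈ demand v (incr p S) := by
  induction S using Finset.induction_on with
  | empty =>
      obtain ⟨D, hD⟩ := demand_nonempty v p
      have : incr p ∅ = p := by funext k; simp [incr]
      exact ⟨D, hD, by rwa [this]⟩
  | @insert j S' hj ih =>
      obtain ⟨D, hDp, hDq⟩ := ih
      set q := incr p S' with hq
      rw [incr_insert p S' j hj]
      by_cases hall : ∀ E ∈ demand v q, j ∈ E
      · -- every demand set at q contains j; D works
        refine ⟨D, hDp, ?_⟩
        apply mem_demand_of_eq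
        rw [util_incr, singleton_inter_card, if_pos (hall D hDq), uMax_incr_single_all hall,
          ← uMax_eq_of_mem hDq]
        norm_num
      · push_neg at hall
        obtain ⟨E, hE, hjE⟩ := hall
        have huq : uMax v (incr q {j}) = uMax v q := uMax_incr_single_avoid hE hjE
        by_cases hjD : j ∈ D
        · -- use GS to move D
          have hle : q ≤ incr q {j} := by
            intro k
            simp only [incr]
            split_ifs <;> omega
          obtain ⟨D'', hD''q1, hD''⟩ := hgs q (incr q {j}) hle D hDq
          have hsub : D \ {j} ⊆ D'' := by
            intro k hk
            rw [Finset.mem_sdiff, Finset.mem_singleton] at hk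
            refine hD'' k hk.1 ?_
            simp only [incr, Finset.mem_singleton, if_neg hk.2]
          have hutil : util v (incr q {j}) D'' = util v q D'' - (({j} ∩ D'').card : ℤ) :=
            util_incr v q {j} D''
          have hjD'' : j ∉ D'' := by
            intro hjin
            rw [singleton_inter_card, if_pos hjin] at hutil
            have h1 : util v (incr q {j}) D'' = uMax v (incr q {j}) :=
              (uMax_eq_of_mem hD''q1).symm
            have h2 : util v q D'' ≤ uMax v q := util_le_uMax _ _ _
            omega
          have hD''q : D'' ∈ demand v q := by
            apply mem_demand_of_eq
            rw [singleton_inter_card, if_neg hjD''] at hutil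
            have h1 : util v (incr q {j}) D'' = uMax v (incr q {j}) :=
              (uMax_eq_of_mem hD''q1).symm
            omega
          -- show D'' ∈ demand v p
          have hcard : (S' ∩ D).card ≤ (S' ∩ D'').card := by
            apply Finset.card_le_card
            intro k hk
            rw [Finset.mem_inter] at hk ⊢
            refine ⟨hk.1, hsub ?_⟩
            rw [Finset.mem_sdiff, Finset.mem_singleton]
            exact ⟨hk.2, fun h => hj (h ▸ hk.1)⟩
          have h1 : util v p D'' = util v q D'' + ((S' ∩ D'').card : ℤ) := by
            have := util_incr v p S' D''
            rw [← hq] at this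
            omega
          have h2 : util v p D = util v q D + ((S' ∩ D).card : ℤ) := by
            have := util_incr v p S' D
            rw [← hq] at this
            omega
          have h3 : util v q D'' = uMax v q := (uMax_eq_of_mem hD''q).symm
          have h4 : util v q D = uMax v q := (uMax_eq_of_mem hDq).symm
          have h5 : util v p D = uMax v p := (uMax_eq_of_mem hDp).symm
          have h6 : util v p D'' ≤ uMax v p := util_le_uMax _ _ _
          have hD''p : D'' ∈ demand v p := by
            apply mem_demand_of_eq
            omega
          exact ⟨D'', hD''p, hD''q1⟩
        · -- D avoids j, so D stays demanded
          refine ⟨D, hDp, ?_⟩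
          apply mem_demand_of_eq
          rw [util_incr, singleton_inter_card, if_neg hjD, huq, ← uMax_eq_of_mem hDq]
          ring

end Key
section Cond

variable {m : ℕ}

/-- Condition (2): `u(p) = u(p+1_S) + l_p(S)`. -/
def Cond2 (v : Finset (Fin m) → ℕ) : Prop :=
  ∀ (p : Fin m → ℕ) (S : Finset (Fin m)),
    uMax v p = uMax v (incr p S) + (req v p S : ℤ)

/-- Condition (1): `u(p) = u(p-1_S) - h_p(S)` for `p ≥ 1` on `S`. -/
def Cond1 (v : Finset (Fin m) → ℕ) : Prop :=
  ∀ (p : Fin m → ℕ) (S : Finset (Fin m)), (∀ j ∈ S, 1 ≤ p j) →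
    uMax v p = uMax v (decr p S) - (red v p S : ℤ)

lemma req_le {v : Finset (Fin m) → ℕ} {p : Fin m → ℕ} {D : Finset (Fin m)}
    (hD : D ∈ demand v p) (S : Finset (Fin m)) : req v p S ≤ (S ∩ D).card :=
  Finset.inf'_le _ hD

lemma le_red {v : Finset (Fin m) → ℕ} {p : Fin m → ℕ} {D : Finset (Fin m)}
    (hD : D ∈ demand v p) (S : Finset (Fin m)) : (S ∩ D).card ≤ red v p S :=
  Finset.le_sup' (fun D => (S ∩ D).card) hD

lemma exists_req (v : Finset (Fin m) → ℕ) (p : Fin m → ℕ) (S : Finset (Fin m)) :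
    ∃ D ∈ demand v p, (S ∩ D).card = req v p S := by
  obtain ⟨D, hD, h⟩ := Finset.exists_mem_eq_inf' (demand_nonempty v p)
    (fun D => (S ∩ D).card)
  exact ⟨D, hD, h.symm⟩

lemma exists_red (v : Finset (Fin m) → ℕ) (p : Fin m → ℕ) (S : Finset (Fin m)) :
    ∃ D ∈ demand v p, (S ∩ D).card = red v p S := by
  obtain ⟨D, hD, h⟩ := Finset.exists_mem_eq_sup' (demand_nonempty v p)
    (fun D => (S ∩ D).card)
  exact ⟨D, hD, h.symm⟩

/-- GS implies condition (2). -/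
lemma cond2_of_gs {v : Finset (Fin m) → ℕ} (hgs : GrossSub v) : Cond2 v := by
  intro p S
  obtain ⟨D, hDp, hDq⟩ := exists_common_demand hgs S p
  obtain ⟨D0, hD0, hD0c⟩ := exists_req v p S
  have h1 : uMax v (incr p S) = uMax v p - ((S ∩ D).card : ℤ) := by
    have := util_incr v p S D
    have hDq' := (uMax_eq_of_mem hDq).symm
    have hDp' := (uMax_eq_of_mem hDp).symm
    omega
  have h2 : uMax v p - ((S ∩ D0).card : ℤ) ≤ uMax v (incr p S) := by
    have := util_incr v p S D0
    have hD0' := (uMax_eq_of_mem hD0).symm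
    have := util_le_uMax v (incr p S) D0
    omega
  have h3 : req v p S ≤ (S ∩ D).card := req_le hDp S
  have : ((S ∩ D).card : ℤ) = (req v p S : ℤ) := by
    rw [hD0c] at h2
    omega
  omega

/-- Condition (2) implies condition (1). -/
lemma cond1_of_cond2 {v : Finset (Fin m) → ℕ} (h2 : Cond2 v) : Cond1 v := by
  intro p S hp
  set r := decr p S with hr
  have hir : incr r S = p := by
    funext j
    simp only [incr, decr, hr]
    split_ifs with hj
    · have := hp j hj
      omega
    · rfl
  have key := h2 r S
  rw [hir] at key
  -- show req v r S = red v p S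
  have hlh : (req v r S : ℤ) = (red v p S : ℤ) := by
    obtain ⟨D, hD, hDc⟩ := exists_req v r S
    obtain ⟨E, hE, hEc⟩ := exists_red v p S
    have hD2 : util v p D = util v r D - ((S ∩ D).card : ℤ) := by
      have := util_incr v r S D
      rw [hir] at this
      omega
    have hDr : util v r D = uMax v r := (uMax_eq_of_mem hD).symm
    have hDp : D ∈ demand v p := by
      apply mem_demand_of_eq
      rw [hD2, hDr, hDc, key]
      ring
    have hle1 : red v p S ≥ (S ∩ D).card := le_red hDp S
    have hE2 : util v p E = util v r E - ((S ∩ E).card : ℤ) := by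
      have := util_incr v r S E
      rw [hir] at this
      omega
    have hEp : util v p E = uMax v p := (uMax_eq_of_mem hE).symm
    have hEr : util v r E ≤ uMax v r := util_le_uMax _ _ _
    have : (red v p S : ℤ) ≤ (req v r S : ℤ) := by
      rw [← hEc, ← hDc]
      omega
    rw [← hDc, ← hEc]
    omega
  omega

/-- Condition (1) implies condition (2). -/
lemma cond2_of_cond1 {v : Finset (Fin m) → ℕ} (h1 : Cond1 v) : Cond2 v := by
  intro p S
  set q := incr p S with hq
  have hq1 : ∀ j ∈ S, 1 ≤ q j := by
    intro j hj
    simp only [hq, incr, if_pos hj]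
    omega
  have hdq : decr q S = p := by
    funext j
    simp only [decr, hq, incr]
    split_ifs with hj <;> omega
  have key := h1 q S hq1
  rw [hdq] at key
  -- show red v q S = req v p S
  have hlh : (red v q S : ℤ) = (req v p S : ℤ) := by
    obtain ⟨D, hD, hDc⟩ := exists_red v q S
    obtain ⟨E, hE, hEc⟩ := exists_req v p S
    have hD2 : util v q D = util v p D - ((S ∩ D).card : ℤ) := util_incr v p S D
    have hDq : util v q D = uMax v q := (uMax_eq_of_mem hD).symm
    have hDp : D ∈ demand v p := by
      apply mem_demand_of_eq
      rw [hDc] at hD2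
      omega
    have hle1 : req v p S ≤ (S ∩ D).card := req_le hDp S
    have hE2 : util v q E = util v p E - ((S ∩ E).card : ℤ) := util_incr v p S E
    have hEp : util v p E = uMax v p := (uMax_eq_of_mem hE).symm
    have hEq : util v q E ≤ uMax v q := util_le_uMax _ _ _
    have : (red v q S : ℤ) ≤ (req v p S : ℤ) := by
      rw [← hEc, ← hDc]
      omega
    rw [← hDc, ← hEc]
    omega
  omega

end Cond
section Step

variable {m : ℕ}

lemma step_lemma {v : Finset (Fin m) → ℕ} (hmono : MonotoneVal v) (h1 : Cond1 v)
    (p : Fin m → ℕ) (k : Fin m) (S : Finset (Fin m)) (hS : S ∈ demand v p) :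
    ∃ S', S' ∈ demand v (incr p {k}) ∧ ∀ j ∈ S, j ≠ k → j ∈ S' := by
  set q := incr p {k} with hq
  by_cases hkS : k ∈ S
  · by_cases hall : ∀ E ∈ demand v p, k ∈ E
    · -- drop is 1, S stays demanded
      refine ⟨S, ?_, fun j hj _ => hj⟩
      apply mem_demand_of_eq
      rw [hq, util_incr, singleton_inter_card, if_pos hkS, uMax_incr_single_all hall,
        ← uMax_eq_of_mem hS]
      norm_num
    · push_neg at hall
      obtain ⟨E, hE, hkE⟩ := hall
      have huq : uMax v q = uMax v p := uMax_incr_single_avoid hE hkE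
      set A := S.erase k with hA
      set A0 := A.filter (fun j => 1 ≤ p j) with hA0
      have hkA0 : k ∉ A0 := fun h => (Finset.mem_erase.1 (Finset.mem_filter.1 h).1).1 rfl
      have hposq : ∀ j ∈ insert k A0, 1 ≤ q j := by
        intro j hj
        rcases Finset.mem_insert.1 hj with rfl | hj
        · simp [hq, incr]
        · have := (Finset.mem_filter.1 hj).2
          simp only [hq, incr, Finset.mem_singleton]
          split_ifs <;> omega
      have hposp : ∀ j ∈ A0, 1 ≤ p j := fun j hj => (Finset.mem_filter.1 hj).2
      have hdecr : decr q (insert k A0) = decr p A0 := by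
        funext j
        simp only [decr, hq, incr, Finset.mem_insert, Finset.mem_singleton]
        by_cases hjk : j = k
        · subst hjk; simp [hkA0]
        · by_cases hjA : j ∈ A0 <;> simp [hjk, hjA]
      have e1 := h1 q (insert k A0) hposq
      rw [hdecr] at e1
      have e2 := h1 p A0 hposp
      have hredp : red v p A0 = A0.card := by
        refine le_antisymm ?_ ?_
        · exact Finset.sup'_le _ _ fun D _ => Finset.card_le_card Finset.inter_subset_left
        · have heq : A0 ∩ S = A0 :=
            Finset.inter_eq_left.2 fun j hj =>
              Finset.erase_subset _ _ ((Finset.mem_filter.1 hj).1)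
          have hle := le_red hS A0
          rw [heq] at hle
          exact hle
      have hredq : red v q (insert k A0) = A0.card := by omega
      obtain ⟨D, hD, hDc⟩ := exists_red v q (insert k A0)
      have hkD : k ∉ D := by
        intro hkD
        have h2 : util v q D = util v p D - ((({k}:Finset (Fin m)) ∩ D).card : ℤ) := by
          rw [hq]; exact util_incr v p {k} D
        rw [singleton_inter_card, if_pos hkD] at h2
        have h3 : util v q D = uMax v q := (uMax_eq_of_mem hD).symm
        have h4 : util v p D ≤ uMax v p := util_le_uMax _ _ _
        omega
      have hA0D : A0 ⊆ D := by
        rw [Finset.insert_inter_of_notMem hkD, hredq] at hDc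
        have hsub : A0 ∩ D ⊆ A0 := Finset.inter_subset_left
        have heq := Finset.eq_of_subset_of_card_le hsub (le_of_eq hDc.symm)
        rw [← heq]
        exact Finset.inter_subset_right
      set Z := A \ A0 with hZ
      have hZ0 : ∀ j ∈ Z, q j = 0 := by
        intro j hjZ
        rw [Finset.mem_sdiff] at hjZ
        have hjA := hjZ.1
        have hnp : ¬ 1 ≤ p j := fun h => hjZ.2 (Finset.mem_filter.2 ⟨hjA, h⟩)
        have hjk : j ≠ k := (Finset.mem_erase.1 hjA).1
        simp only [hq, incr, Finset.mem_singleton, if_neg hjk]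
        omega
      refine ⟨D ∪ Z, ?_, ?_⟩
      · apply mem_demand_of_eq
        refine le_antisymm (util_le_uMax _ _ _) ?_
        have hDu : util v q D = uMax v q := (uMax_eq_of_mem hD).symm
        have hval : (v D : ℤ) ≤ (v (D ∪ Z) : ℤ) := by
          exact_mod_cast hmono Finset.subset_union_left
        have hsum : ∑ j ∈ D ∪ Z, (q j : ℤ) = ∑ j ∈ D, (q j : ℤ) := by
          have hdz : D ∪ Z = D ∪ (Z \ D) := (Finset.union_sdiff_self_eq_union).symm
          rw [hdz, Finset.sum_union Finset.disjoint_sdiff]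
          have hz : ∑ j ∈ Z \ D, (q j : ℤ) = 0 :=
            Finset.sum_eq_zero fun j hj => by
              rw [hZ0 j (Finset.mem_sdiff.1 hj).1]; rfl
          omega
        calc uMax v q = util v q D := hDu.symm
          _ ≤ util v q (D ∪ Z) := by
              unfold util
              rw [hsum]
              omega
      · intro j hjS hjk
        by_cases hjA0 : j ∈ A0
        · exact Finset.mem_union_left _ (hA0D hjA0)
        · exact Finset.mem_union_right _
            (Finset.mem_sdiff.2 ⟨Finset.mem_erase.2 ⟨hjk, hjS⟩, hjA0⟩)
  · refine ⟨S, ?_, fun j hj _ => hj⟩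
    apply mem_demand_of_eq
    refine le_antisymm (util_le_uMax _ _ _) ?_
    have hus : util v q S = util v p S := by
      rw [hq, util_incr, singleton_inter_card, if_neg hkS]; ring
    rw [hus, ← uMax_eq_of_mem hS]
    exact uMax_incr_le v p {k}

end Step
section GS

variable {m : ℕ}

lemma gs_of_cond1 {v : Finset (Fin m) → ℕ} (hmono : MonotoneVal v) (h1 : Cond1 v) :
    GrossSub v := by
  intro p q hpq S hS
  suffices H : ∀ (n : ℕ) (p : Fin m → ℕ), (∑ j, (q j - p j)) = n → p ≤ q →
      ∀ S ∈ demand v p, ∃ S' ∈ demand v q, ∀ j ∈ S, p j = q j → j ∈ S' from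
    H (∑ j, (q j - p j)) p rfl hpq S hS
  intro n
  induction n with
  | zero =>
      intro p hsum hpq S hS
      have hpq' : p = q := by
        funext j
        have h0 : q j ≤ p j :=
          Nat.sub_eq_zero_iff_le.1 (Finset.sum_eq_zero_iff.1 hsum j (Finset.mem_univ j))
        exact Nat.le_antisymm (hpq j) h0
      subst hpq'
      exact ⟨S, hS, fun j hj _ => hj⟩
  | succ n ih =>
      intro p hsum hpq S hS
      have hex : ∃ k, q k - p k ≠ 0 := by
        by_contra h
        push_neg at h
        rw [Finset.sum_eq_zero (fun j _ => h j)] at hsum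
        omega
      obtain ⟨k, hk⟩ := hex
      have hk' : p k < q k := by have := hpq k; omega
      set p1 := incr p {k} with hp1
      have hp1q : p1 ≤ q := by
        intro j
        simp only [hp1, incr, Finset.mem_singleton]
        split_ifs with h
        · subst h; omega
        · exact hpq j
      have hsum1 : (∑ j, (q j - p1 j)) = n := by
        have hsplit : ∀ (r : Fin m → ℕ),
            ∑ j, (q j - r j) = (q k - r k) + ∑ j ∈ Finset.univ.erase k, (q j - r j) := by
          intro r
          rw [← Finset.add_sum_erase _ _ (Finset.mem_univ k)]
        rw [hsplit] at hsum
        rw [hsplit]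
        have hcong : ∑ j ∈ Finset.univ.erase k, (q j - p1 j)
            = ∑ j ∈ Finset.univ.erase k, (q j - p j) := by
          apply Finset.sum_congr rfl
          intro j hj
          have hjk := Finset.ne_of_mem_erase hj
          simp [hp1, incr, hjk]
        rw [hcong]
        have hpk : p1 k = p k + 1 := by simp [hp1, incr]
        omega
      obtain ⟨S1, hS1, hS1c⟩ := step_lemma hmono h1 p k S hS
      obtain ⟨S', hS', hS'c⟩ := ih p1 hsum1 hp1q S1 hS1
      refine ⟨S', hS', ?_⟩
      intro j hj hpj
      have hjk : j ≠ k := fun h => by subst h; omega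
      have hj1 : j ∈ S1 := hS1c j hj hjk
      apply hS'c j hj1
      simp [hp1, incr, hjk, hpj]

end GS
theorem stmt1 {m : ℕ} (v : Finset (Fin m) → ℕ)
    (hzero : v ∅ = 0) (hmono : MonotoneVal v) :
    ((∀ (p : Fin m → ℕ) (S : Finset (Fin m)), (∀ j ∈ S, 1 ≤ p j) →
        uMax v p = uMax v (decr p S) - (red v p S : ℤ)) ↔ GrossSub v) ∧
    ((∀ (p : Fin m → ℕ) (S : Finset (Fin m)),
        uMax v p = uMax v (incr p S) + (req v p S : ℤ)) ↔ GrossSub v) := by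
  constructor
  · exact ⟨fun h1 => gs_of_cond1 hmono h1,
      fun hgs => cond1_of_cond2 (cond2_of_gs hgs)⟩
  · exact ⟨fun h2 => gs_of_cond1 hmono (cond1_of_cond2 h2),
      fun hgs => cond2_of_gs hgs⟩
end

section
/- Assume every bidder's valuation is monotone gross substitute. For every price vector p ∈ ℕ^m and every nonempty S ⊆ Ω with S ∉ ED(p), there exists a nonempty weakly under-demanded set at p + 1_S, i.e. WUD(p + 1_S) ≠ {∅}. -/
lemma util_incr_eq {m : ℕ} (v : Finset (Fin m) → ℕ) (p : Fin m → ℕ) (S T : Finset (Fin m)) :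
    util v p T = util v (incr p S) T + ((S ∩ T).card : ℤ) := by
  unfold util incr
  have : (∑ j ∈ T, ((if j ∈ S then p j + 1 else p j : ℕ) : ℤ))
      = ∑ j ∈ T, ((p j : ℤ) + if j ∈ S then 1 else 0) := by
    apply Finset.sum_congr rfl; intro j _; split <;> simp
  rw [this, Finset.sum_add_distrib, Finset.sum_ite_mem]
  have : (T ∩ S).card = (S ∩ T).card := by rw [Finset.inter_comm]
  simp [this]
  ring

lemma red_incr_le_req {m : ℕ} (v : Finset (Fin m) → ℕ) (p : Fin m → ℕ) (S : Finset (Fin m)) :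
    red v (incr p S) S ≤ req v p S := by
  unfold red req
  rw [Finset.sup'_le_iff]
  intro D hD
  rw [Finset.le_inf'_iff]
  intro D' hD'
  have h1 := (Finset.mem_filter.1 hD).2 D'
  have h2 := (Finset.mem_filter.1 hD').2 D
  rw [util_incr_eq v p S D, util_incr_eq v p S D'] at h2
  have : ((S ∩ D).card : ℤ) ≤ ((S ∩ D').card : ℤ) := by linarith
  exact_mod_cast this

theorem stmt13 {m n : ℕ} (v : Fin n → Finset (Fin m) → ℕ)
    (hzero : ∀ i, v i ∅ = 0) (hmono : ∀ i, MonotoneVal (v i))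
    (hgs : ∀ i, GrossSub (v i))
    (p : Fin m → ℕ) (S : Finset (Fin m)) (hS : S ≠ ∅)
    (hnotED : ¬ ExcessDemand v p S) :
    ∃ T : Finset (Fin m), T ≠ ∅ ∧ WeaklyUnderDemanded v (incr p S) T := by
  by_cases hOD : OverDemanded v p S
  · -- then the second condition of ED fails
    unfold ExcessDemand at hnotED
    push_neg at hnotED
    obtain ⟨T, hTS, hTne, hT⟩ := hnotED hOD
    exact ⟨T, hTne.ne_empty, hT⟩
  · refine ⟨S, hS, ?_⟩
    unfold OverDemanded at hOD
    push_neg at hOD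
    unfold WeaklyUnderDemanded
    calc redAll v (incr p S) S ≤ reqAll v p S := by
          unfold redAll reqAll
          exact Finset.sum_le_sum fun i _ => red_incr_le_req (v i) p S
      _ ≤ S.card := hOD
end
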